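/- arXiv:1504.03352 — 12 statements merged into one kernel-verified Lean document; each statement's English description precedes it below -/
import Mathlib

section
/- If A, B, C are R-modules with A a self pure submodule of B and B a self pure submodule of C, then A is a self pure submodule of C. -/
universe u v w

/-- The annihilator of an element `a` of a left `R`-module, as a left ideal of `R`. -/
def annihilatorOf (R : Type u) [Ring R] {A : Type v} [AddCommGroup A] [Module R A] (a : A) :
    Submodule R R := LinearMap.ker (LinearMap.toSpanSingleton R A a)

/-- `J` belongs to the filter `Ω̄(A)` of left ideals generated by annihilators of elements of
`A`, i.e. `J` contains a finite intersection of annihilators of elements of `A`. -/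
def MemOmegaBar (R : Type u) [Ring R] (A : Type v) [AddCommGroup A] [Module R A]
    (J : Submodule R R) : Prop :=
  ∃ s : Finset A, (⨅ a ∈ s, annihilatorOf R a) ≤ J

/-- `A` is a self pure submodule of `B` (along the injection `i`): every map `f : L → A` from a
finitely generated left ideal with `ker f ∈ Ω̄(A)` which extends to a map `R → B` also extends
to a map `R → A`. -/
def IsSelfPureIn (R : Type u) [Ring R] {A : Type v} {B : Type w} [AddCommGroup A] [Module R A]
    [AddCommGroup B] [Module R B] (i : A →ₗ[R] B) : Prop :=
  ∀ L : Submodule R R, L.FG → ∀ f : L →ₗ[R] A,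
    MemOmegaBar R A ((LinearMap.ker f).map L.subtype) →
    (∃ g : R →ₗ[R] B, ∀ x : L, g x = i (f x)) →
    ∃ h : R →ₗ[R] A, ∀ x : L, h x = f x

/-- `A` is absolutely self pure: every map `f : L → A` from a finitely generated left ideal of
`R` with `ker f ∈ Ω̄(A)` extends to a map `R → A`. -/
def AbsolutelySelfPure (R : Type u) [Ring R] (A : Type v) [AddCommGroup A] [Module R A] : Prop :=
  ∀ L : Submodule R R, L.FG → ∀ f : L →ₗ[R] A,
    MemOmegaBar R A ((LinearMap.ker f).map L.subtype) →
    ∃ h : R →ₗ[R] A, ∀ x : L, h x = f x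

/-- `Q` is quasi injective: every homomorphism from a submodule of `Q` into `Q` extends to an
endomorphism of `Q`. -/
def IsQuasiInjective (R : Type u) [Ring R] (Q : Type v) [AddCommGroup Q] [Module R Q] : Prop :=
  ∀ (N : Submodule R Q) (f : N →ₗ[R] Q), ∃ g : Q →ₗ[R] Q, ∀ x : N, g x = f x

/-- `A` is a pure submodule of `B` (along `i`): for every finitely generated submodule `K` of a
finite free module and every commuting square, a map `F → A` makes the upper triangle commute. -/
def IsPureIn (R : Type u) [Ring R] {A : Type v} {B : Type w} [AddCommGroup A] [Module R A]
    [AddCommGroup B] [Module R B] (i : A →ₗ[R] B) : Prop :=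
  ∀ (n : ℕ) (K : Submodule R (Fin n → R)), K.FG →
    ∀ (f : K →ₗ[R] A) (g : (Fin n → R) →ₗ[R] B),
      (∀ x : K, g x = i (f x)) →
      ∃ h : (Fin n → R) →ₗ[R] A, ∀ x : K, h x = f x

/-- `A` is absolutely pure: every map into `A` from a finitely generated submodule of a finite
free module extends to the free module. -/
def IsAbsolutelyPure (R : Type u) [Ring R] (A : Type v) [AddCommGroup A] [Module R A] : Prop :=
  ∀ (n : ℕ) (K : Submodule R (Fin n → R)), K.FG →
    ∀ f : K →ₗ[R] A, ∃ g : (Fin n → R) →ₗ[R] A, ∀ x : K, g x = f x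

theorem selfPure_trans {R : Type u} [Ring R] {A : Type v} {B C : Type w}
    [AddCommGroup A] [Module R A] [AddCommGroup B] [Module R B] [AddCommGroup C] [Module R C]
    (i : A →ₗ[R] B) (j : B →ₗ[R] C) (hi : Function.Injective i) (hj : Function.Injective j)
    (hAB : IsSelfPureIn R i) (hBC : IsSelfPureIn R j) :
    IsSelfPureIn R (j.comp i) := by
  classical
  intro L hL f hker hext
  have hkeq : LinearMap.ker (i.comp f) = LinearMap.ker f := by
    ext x
    simp only [LinearMap.mem_ker, LinearMap.comp_apply]
    exact (map_eq_zero_iff i hi)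
  have hkerB : MemOmegaBar R B ((LinearMap.ker (i.comp f)).map L.subtype) := by
    obtain ⟨s, hs⟩ := hker
    refine ⟨s.image i, ?_⟩
    rw [hkeq]
    refine le_trans ?_ hs
    refine le_iInf₂ fun a ha => ?_
    have : annihilatorOf R (i a) = annihilatorOf R a := by
      ext r
      simp only [annihilatorOf, LinearMap.mem_ker, LinearMap.toSpanSingleton_apply,
        ← map_smul]
      exact map_eq_zero_iff i hi
    calc (⨅ b ∈ s.image i, annihilatorOf R b) ≤ annihilatorOf R (i a) :=
          iInf₂_le (i a) (Finset.mem_image_of_mem i ha)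
      _ = annihilatorOf R a := this
  obtain ⟨g, hg⟩ := hext
  obtain ⟨g', hg'⟩ := hBC L hL (i.comp f) hkerB ⟨g, fun x => by
    simpa using hg x⟩
  exact hAB L hL f hker ⟨g', fun x => by simpa using hg' x⟩
end

section
/- An R-module A is absolutely self pure if and only if for each finitely generated left ideal L of R and each R-map f : L → A with ker f ∈ Ω̄(A), f extends to an R-map R → A. -/
universe u v w

theorem absolutelySelfPure_iff {R : Type u} [Ring R] (A : Type v)
    [AddCommGroup A] [Module R A] :
    (∀ (B : Type v) [AddCommGroup B] [Module R B] (i : A →ₗ[R] B),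
      Function.Injective i → IsSelfPureIn R i) ↔ AbsolutelySelfPure R A := by
  constructor
  · intro H L hFG f hΩ
    obtain ⟨s, hs⟩ := hΩ
    -- φ : R → (s → A), r ↦ (r • a)_{a ∈ s}
    set φ : R →ₗ[R] ((↥s) → A) :=
      LinearMap.pi (fun a => LinearMap.toSpanSingleton R A (a : A)) with hφ
    have hker : ∀ x : L, φ (x : R) = 0 → f x = 0 := by
      intro x hx
      have hmem : (x : R) ∈ ⨅ a ∈ s, annihilatorOf R a := by
        simp only [Submodule.mem_iInf]
        intro a ha
        have := congrFun hx ⟨a, ha⟩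
        simpa [annihilatorOf, LinearMap.toSpanSingleton, φ] using this
      have : (x : R) ∈ (LinearMap.ker f).map L.subtype := hs hmem
      obtain ⟨y, hy, hyx⟩ := this
      have : y = x := Subtype.ext hyx
      rw [← this]; exact hy
    -- pushout
    set k : L →ₗ[R] A × ((↥s) → A) :=
      LinearMap.prod f (-(φ.comp L.subtype)) with hk
    set D : Submodule R (A × ((↥s) → A)) := LinearMap.range k with hD
    set i : A →ₗ[R] (A × ((↥s) → A)) ⧸ D :=
      D.mkQ.comp (LinearMap.inl R A _) with hi
    have hinj : Function.Injective i := by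
      rw [← LinearMap.ker_eq_bot]
      rw [Submodule.eq_bot_iff]
      intro a ha
      have : ((a, 0) : A × ((↥s) → A)) ∈ D := by
        simpa [i, Submodule.Quotient.mk_eq_zero] using ha
      obtain ⟨x, hx⟩ := this
      have h1 : f x = a := congrArg Prod.fst hx
      have h2 : -(φ (x : R)) = 0 := congrArg Prod.snd hx
      have h3 : φ (x : R) = 0 := by simpa using h2
      rw [← h1]; exact hker x h3
    set g : R →ₗ[R] (A × ((↥s) → A)) ⧸ D :=
      D.mkQ.comp ((LinearMap.inr R A _).comp φ) with hg
    have hcomm : ∀ x : L, g (x : R) = i (f x) := by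
      intro x
      show D.mkQ (0, φ (x : R)) = D.mkQ (f x, 0)
      rw [Submodule.mkQ_apply, Submodule.mkQ_apply,
        Submodule.Quotient.eq]
      exact ⟨-x, by simp [k]⟩
    exact H _ i hinj L hFG f ⟨s, hs⟩ ⟨g, hcomm⟩
  · intro H B _ _ i _ L hFG f hΩ _
    exact H L hFG f hΩ
end

section
/- A self pure submodule of an absolutely self pure module is absolutely self pure. -/
universe u v w

theorem absolutelySelfPure_of_selfPureIn {R : Type u} [Ring R] {A : Type v} {B : Type w}
    [AddCommGroup A] [Module R A] [AddCommGroup B] [Module R B]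
    (i : A →ₗ[R] B) (hi : Function.Injective i)
    (hA : IsSelfPureIn R i) (hB : AbsolutelySelfPure R B) :
    AbsolutelySelfPure R A := by
  classical
  intro L hL f hker
  -- ker (i ∘ f) = ker f since i is injective
  have hkerc : LinearMap.ker (i.comp f) = LinearMap.ker f := by
    rw [LinearMap.ker_comp, LinearMap.ker_eq_bot.2 hi, Submodule.comap_bot]
  -- annihilators agree
  have hann : ∀ a : A, annihilatorOf R (i a) = annihilatorOf R a := by
    intro a
    ext r
    simp only [annihilatorOf, LinearMap.mem_ker, LinearMap.toSpanSingleton_apply]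
    constructor
    · intro h
      apply hi
      rw [map_smul, h, map_zero]
    · intro h
      rw [← map_smul, h, map_zero]
  -- MemOmegaBar transfers to B
  have hkerB : MemOmegaBar R B ((LinearMap.ker (i.comp f)).map L.subtype) := by
    obtain ⟨s, hs⟩ := hker
    refine ⟨s.image i, le_trans ?_ (hkerc ▸ hs)⟩
    apply le_iInf; intro a; apply le_iInf; intro ha
    have : annihilatorOf R a = annihilatorOf R (i a) := (hann a).symm
    rw [this]
    exact iInf₂_le (i a) (Finset.mem_image_of_mem i ha)
  obtain ⟨g, hg⟩ := hB L hL (i.comp f) hkerB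
  exact hA L hL f hker ⟨g, fun x => hg x⟩
end

section
/- A direct summand of an absolutely self pure module is absolutely self pure. -/
universe u v w

theorem absolutelySelfPure_of_directSummand {R : Type u} [Ring R] {A : Type v}
    {B : Type w} [AddCommGroup A] [Module R A] [AddCommGroup B] [Module R B]
    (i : A →ₗ[R] B) (p : B →ₗ[R] A) (hpi : p.comp i = LinearMap.id)
    (hB : AbsolutelySelfPure R B) :
    AbsolutelySelfPure R A := by
  classical
  intro L hL f hker
  have hpia : ∀ a : A, p (i a) = a := fun a =>
    congrArg (fun g : A →ₗ[R] A => g a) hpi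
  have hkerB : MemOmegaBar R B ((LinearMap.ker (i.comp f)).map L.subtype) := by
    obtain ⟨s, hs⟩ := hker
    refine ⟨s.image i, le_trans (le_trans ?_ hs) ?_⟩
    · refine le_iInf fun a => le_iInf fun ha => ?_
      refine le_trans (iInf_le _ (i a)) (le_trans (iInf_le _ (Finset.mem_image_of_mem i ha)) ?_)
      intro r hr
      have : r • i a = 0 := hr
      have : i (r • a) = 0 := by rw [map_smul]; exact this
      have : (r • a : A) = 0 := by
        have := congrArg p this
        rwa [hpia, map_zero] at this
      exact this
    · have : LinearMap.ker f ≤ LinearMap.ker (i.comp f) := fun x hx => by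
        simp only [LinearMap.mem_ker, LinearMap.comp_apply] at *
        rw [hx, map_zero]
      exact Submodule.map_mono this
  obtain ⟨g, hg⟩ := hB L hL (i.comp f) hkerB
  refine ⟨p.comp g, fun x => ?_⟩
  simp only [LinearMap.comp_apply]
  rw [hg x]
  exact hpia (f x)
end

section
/- An R-module A is absolutely self pure if and only if every direct sum of copies of A (indexed by an arbitrary set I) is absolutely self pure. -/
universe u v w

section Aux

variable {R : Type u} [Ring R]

lemma mem_annihilatorOf_iff {A : Type v} [AddCommGroup A] [Module R A] (a : A) (r : R) :
    r ∈ annihilatorOf R a ↔ r • a = 0 := by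
  simp [annihilatorOf, LinearMap.mem_ker]

/-- Absolute self purity transfers along a linear equivalence. -/
lemma absolutelySelfPure_congr {A : Type v} {B : Type w} [AddCommGroup A] [Module R A]
    [AddCommGroup B] [Module R B] (e : A ≃ₗ[R] B) (hA : AbsolutelySelfPure R A) :
    AbsolutelySelfPure R B := by
  classical
  intro L hL f hmem
  have hker : LinearMap.ker ((e.symm : B →ₗ[R] A).comp f) = LinearMap.ker f := by
    ext x
    simp [LinearMap.mem_ker]
  have hmem' : MemOmegaBar R A
      ((LinearMap.ker ((e.symm : B →ₗ[R] A).comp f)).map L.subtype) := by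
    obtain ⟨s, hs⟩ := hmem
    refine ⟨s.image e.symm, ?_⟩
    rw [hker]
    refine le_trans (le_iInf₂ fun b hb => ?_) hs
    have h1 : (⨅ a ∈ s.image e.symm, annihilatorOf R a) ≤ annihilatorOf R (e.symm b) :=
      iInf₂_le (e.symm b) (Finset.mem_image_of_mem _ hb)
    refine le_trans h1 ?_
    intro r hr
    rw [mem_annihilatorOf_iff] at hr ⊢
    have : e (r • e.symm b) = 0 := by rw [hr, map_zero]
    simpa using this
  obtain ⟨h, hh⟩ := hA L hL ((e.symm : B →ₗ[R] A).comp f) hmem'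
  refine ⟨(e : A →ₗ[R] B).comp h, fun x => ?_⟩
  have := hh x
  simp only [LinearMap.coe_comp, Function.comp_apply] at this ⊢
  rw [this]
  simp

end Aux

theorem absolutelySelfPure_iff_directSum {R : Type u} [Ring R] (A : Type v)
    [AddCommGroup A] [Module R A] :
    AbsolutelySelfPure R A ↔ ∀ I : Type w, AbsolutelySelfPure R (I →₀ A) := by
  classical
  constructor
  · intro hA I L hL f hmem
    -- Step 1: find a finite set S of indices containing the support of every `f x`.
    obtain ⟨t, ht⟩ := hL
    have htL : ∀ r ∈ t, r ∈ L := fun r hr => ht ▸ Submodule.subset_span hr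
    set S : Finset I := t.attach.biUnion
      (fun r => (f ⟨r.1, htL r.1 r.2⟩).support) with hS
    have key : ∀ y, y ∈ Submodule.span R (t : Set R) →
        ∀ h : y ∈ L, (f ⟨y, h⟩).support ⊆ S := by
      intro y hy
      induction hy using Submodule.span_induction with
      | mem r hr =>
        intro h i hi
        rw [hS]
        exact Finset.mem_biUnion.2 ⟨⟨r, hr⟩, Finset.mem_attach _ _, hi⟩
      | zero =>
        intro h
        have h0 : (⟨(0 : R), h⟩ : L) = 0 := rfl
        rw [h0, map_zero]
        simp
      | add a b ha hb iha ihb =>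
        intro h
        have hadd : f ⟨a + b, h⟩ = f ⟨a, ht ▸ ha⟩ + f ⟨b, ht ▸ hb⟩ := by
          rw [← map_add]; rfl
        rw [hadd]
        exact (Finsupp.support_add).trans
          (Finset.union_subset (iha (ht ▸ ha)) (ihb (ht ▸ hb)))
      | smul r a ha iha =>
        intro h
        have hsm : f ⟨r • a, h⟩ = r • f ⟨a, ht ▸ ha⟩ := by
          rw [← map_smul]; rfl
        rw [hsm]
        exact Finsupp.support_smul.trans (iha (ht ▸ ha))
    have hsupp : ∀ x : L, (f x).support ⊆ S := fun x =>
      key x.1 (by rw [ht]; exact x.2) x.2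
    -- Step 2: for each i, extend the i-th component of f.
    have hcomp : ∀ i : I, ∃ h : R →ₗ[R] A,
        ∀ x : L, h x = ((Finsupp.lapply i : (I →₀ A) →ₗ[R] A).comp f) x := by
      intro i
      apply hA L ⟨t, ht⟩
      obtain ⟨s, hs⟩ := hmem
      refine ⟨s.biUnion (fun b => b.support.image b), ?_⟩
      have h1 : (⨅ a ∈ s.biUnion (fun b => b.support.image b), annihilatorOf R a)
          ≤ ⨅ b ∈ s, annihilatorOf R b := by
        refine le_iInf₂ fun b hb => ?_
        intro r hr
        rw [mem_annihilatorOf_iff]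
        ext j
        by_cases hj : j ∈ b.support
        · have hmemb : b j ∈ s.biUnion (fun b => b.support.image b) :=
            Finset.mem_biUnion.2 ⟨b, hb, Finset.mem_image_of_mem _ hj⟩
          have hrbj : r • b j = 0 := by
            have := (Submodule.mem_iInf _).1 ((Submodule.mem_iInf _).1 hr (b j)) hmemb
            rwa [mem_annihilatorOf_iff] at this
          simp [hrbj]
        · have : b j = 0 := Finsupp.notMem_support_iff.1 hj
          simp [this]
      have h2 : (LinearMap.ker f).map L.subtype
          ≤ (LinearMap.ker ((Finsupp.lapply i : (I →₀ A) →ₗ[R] A).comp f)).map L.subtype := by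
        apply Submodule.map_mono
        intro x hx
        simp only [LinearMap.mem_ker] at hx ⊢
        simp [hx]
      exact le_trans h1 (le_trans hs h2)
    choose hmap hmapeq using hcomp
    -- Step 3: assemble.
    refine ⟨(∑ i ∈ S, (Finsupp.lsingle (R := R) (M := A) i).comp (hmap i) :
      R →ₗ[R] (I →₀ A)), fun x => ?_⟩
    rw [LinearMap.sum_apply]
    simp only [LinearMap.coe_comp, Function.comp_apply]
    have : ∀ i ∈ S, Finsupp.lsingle (R := R) (M := A) i (hmap i x) = Finsupp.single i (f x i) := by
      intro i _
      have := hmapeq i x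
      simp only [LinearMap.coe_comp, Function.comp_apply, Finsupp.lapply_apply] at this
      rw [this]
      rfl
    rw [Finset.sum_congr rfl this]
    rw [← Finset.sum_subset (hsupp x) (fun i _ hi => by
      rw [Finsupp.notMem_support_iff.1 hi, Finsupp.single_zero])]
    exact Finsupp.sum_single (f x)
  · intro h
    exact absolutelySelfPure_congr
      (Finsupp.LinearEquiv.finsuppUnique R A PUnit.{w + 1}) (h PUnit.{w + 1})
end

section
/- If every left R-module is absolutely self pure, then R is von Neumann regular. -/
universe u v w

theorem vonNeumannRegular_of_all_absolutelySelfPure (R : Type u) [Ring R]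
    (h : ∀ (A : Type u) [AddCommGroup A] [Module R A], AbsolutelySelfPure R A) :
    ∀ a : R, ∃ x : R, a * x * a = a := by
  intro a
  set I : Submodule R R := LinearMap.ker (LinearMap.toSpanSingleton R R a) with hI
  let A := R × (R ⧸ I)
  let L : Submodule R R := Submodule.span R {a}
  let e1 : L ≃ₗ[R] LinearMap.range (LinearMap.toSpanSingleton R R a) :=
    LinearEquiv.ofEq _ _ (LinearMap.span_singleton_eq_range R R a)
  let e2 : (R ⧸ I) ≃ₗ[R] LinearMap.range (LinearMap.toSpanSingleton R R a) :=
    LinearMap.quotKerEquivRange (LinearMap.toSpanSingleton R R a)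
  let f : L →ₗ[R] A :=
    LinearMap.prod 0 (e2.symm.toLinearMap ∘ₗ e1.toLinearMap)
  have hmem : MemOmegaBar R A ((LinearMap.ker f).map L.subtype) := by
    refine ⟨{((1 : R), (0 : R ⧸ I))}, ?_⟩
    intro r hr
    simp only [Finset.mem_singleton, iInf_iInf_eq_left] at hr
    have hr' : r • ((1 : R), (0 : R ⧸ I)) = 0 := hr
    have : r * 1 = 0 := congrArg Prod.fst hr'
    rw [mul_one] at this
    rw [this]
    exact Submodule.zero_mem _
  obtain ⟨g, hg⟩ := h A L (Submodule.fg_span_singleton a) f hmem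
  have haL : a ∈ L := Submodule.mem_span_singleton_self a
  have key : f ⟨a, haL⟩ = ((0 : R), Submodule.Quotient.mk (1 : R)) := by
    have h2 : e2.symm (e1 ⟨a, haL⟩) = Submodule.Quotient.mk (1 : R) := by
      rw [LinearEquiv.symm_apply_eq]
      apply Subtype.ext
      show (e1 ⟨a, haL⟩ : R) = (e2 (Submodule.Quotient.mk (1 : R)) : R)
      have : (e2 (Submodule.Quotient.mk (1 : R)) : R)
          = LinearMap.toSpanSingleton R R a 1 := by
        simp [e2, LinearMap.quotKerEquivRange]
      rw [this]
      simp [e1, LinearMap.toSpanSingleton_apply]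
    show ((0 : R), e2.symm (e1 ⟨a, haL⟩)) = _
    rw [h2]
  have hga : g a = ((0 : R), Submodule.Quotient.mk (1 : R)) := by
    have := hg ⟨a, haL⟩
    rw [key] at this
    exact this
  obtain ⟨z, hz⟩ := Submodule.Quotient.mk_surjective I (g 1).2
  refine ⟨z, ?_⟩
  have hsmul : g a = a • g 1 := by
    rw [← map_smul, smul_eq_mul, mul_one]
  have h2 : (a • g 1).2 = Submodule.Quotient.mk (1 : R) := by
    rw [← hsmul, hga]
  have h3 : a • (g 1).2 = Submodule.Quotient.mk (1 : R) := h2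
  rw [← hz, ← Submodule.Quotient.mk_smul] at h3
  have h4 : a • z - 1 ∈ I := (Submodule.Quotient.eq I).mp h3
  have h5 : (a • z - 1) • a = 0 := h4
  rw [smul_eq_mul, smul_eq_mul, sub_mul, one_mul, sub_eq_zero] at h5
  rw [mul_assoc] at h5 ⊢
  exact h5
end

section
/- A ring R is von Neumann regular if and only if every left R-module is absolutely self pure. -/
universe u v w

/-!
In a von Neumann regular ring every finitely generated left ideal is generated by an idempotent:
given `Re` with `e` idempotent and `b`, replace `b` by `b - be` and then by an idempotent `f` with
`fe = 0`; then `Re + Rb = R(e + f - ef)`. A map `φ` from `Re` extends to `R` by `r ↦ φ (re)`,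
whatever its kernel. Conversely, apply absolute self purity to the inclusion `Ra → R × Ra`: its
kernel `0` lies in `Ω̄(R × Ra)` because `(1, 0)` has zero annihilator, and the `Ra`-component of an
extension is a retraction `g : R → Ra`; writing `g 1 = xa` gives `a = g a = a x a`.
-/

section

variable {R : Type u} [Ring R] {A : Type v} [AddCommGroup A] [Module R A]

open Submodule

theorem isIdempotentElem_mul_and_span_eq {a x : R} (h : a * x * a = a) :
    IsIdempotentElem (x * a) ∧ span R {x * a} = span R {a} := by
  refine ⟨?_, le_antisymm ?_ ?_⟩
  · rw [IsIdempotentElem, mul_assoc, ← mul_assoc a, h]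
  · exact span_le.mpr <| Set.singleton_subset_iff.mpr <| smul_mem _ x (mem_span_singleton_self a)
  · refine span_le.mpr <| Set.singleton_subset_iff.mpr <| mem_span_singleton.mpr ⟨a, ?_⟩
    rw [smul_eq_mul, ← mul_assoc, h]

theorem span_sup_span_eq_span_sup_span_sub_mul (e b : R) :
    span R {e} ⊔ span R {b} = span R {e} ⊔ span R {b - b * e} := by
  have hbe : b * e ∈ span R {e} := smul_mem _ b (mem_span_singleton_self e)
  refine le_antisymm (sup_le le_sup_left ?_) (sup_le le_sup_left ?_) <;>
    refine span_le.mpr (Set.singleton_subset_iff.mpr ?_)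
  · simpa using add_mem (mem_sup_right (mem_span_singleton_self (b - b * e))) (mem_sup_left hbe)
  · exact sub_mem (mem_sup_right (mem_span_singleton_self b)) (mem_sup_left hbe)

theorem span_sup_span_eq_of_mul_eq_zero {e f : R} (he : IsIdempotentElem e)
    (hf : IsIdempotentElem f) (hfe : f * e = 0) :
    IsIdempotentElem (e + f - e * f) ∧
      span R {e} ⊔ span R {f} = span R {e + f - e * f} := by
  set g := e + f - e * f
  have hge : e * g = e := by
    simp only [g, mul_sub, mul_add, ← mul_assoc, he.eq, add_sub_cancel_right]
  have hgf : f * g = f := by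
    simp only [g, mul_sub, mul_add, ← mul_assoc, hf.eq, hfe, zero_add, zero_mul, sub_zero]
  refine ⟨?_, le_antisymm (sup_le ?_ ?_) ?_⟩
  · simp only [IsIdempotentElem, g, sub_mul, add_mul, hge, hgf, mul_assoc]
  · exact span_le.mpr <| Set.singleton_subset_iff.mpr <| mem_span_singleton.mpr ⟨e, hge⟩
  · exact span_le.mpr <| Set.singleton_subset_iff.mpr <| mem_span_singleton.mpr ⟨f, hgf⟩
  · refine span_le.mpr <| Set.singleton_subset_iff.mpr ?_
    have : g = e + (1 - e) * f := by simp only [g, sub_mul, one_mul]; abel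
    rw [this]
    exact add_mem (mem_sup_left (mem_span_singleton_self e))
      (mem_sup_right (smul_mem _ _ (mem_span_singleton_self f)))

theorem exists_isIdempotentElem_span_sup_eq (hreg : ∀ a : R, ∃ x : R, a * x * a = a) {e : R}
    (he : IsIdempotentElem e) (b : R) :
    ∃ g : R, IsIdempotentElem g ∧ span R {e} ⊔ span R {b} = span R {g} := by
  obtain ⟨y, hy⟩ := hreg (b - b * e)
  obtain ⟨hf, hspan⟩ := isIdempotentElem_mul_and_span_eq hy
  have hfe : y * (b - b * e) * e = 0 := by
    rw [mul_assoc, sub_mul, mul_assoc, he.eq, sub_self, mul_zero]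
  obtain ⟨hg, hsup⟩ := span_sup_span_eq_of_mul_eq_zero he hf hfe
  exact ⟨_, hg, by rw [span_sup_span_eq_span_sup_span_sub_mul, ← hspan, hsup]⟩

theorem exists_isIdempotentElem_eq_span_of_fg (hreg : ∀ a : R, ∃ x : R, a * x * a = a)
    {L : Submodule R R} (hL : L.FG) :
    ∃ e : R, IsIdempotentElem e ∧ L = span R {e} := by
  classical
  obtain ⟨s, rfl⟩ := hL
  induction s using Finset.induction_on with
  | empty => exact ⟨0, IsIdempotentElem.zero, by simp⟩
  | insert b s _ ih =>
    obtain ⟨e, he, hs⟩ := ih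
    obtain ⟨g, hg, hsup⟩ := exists_isIdempotentElem_span_sup_eq hreg he b
    exact ⟨g, hg, by rw [Finset.coe_insert, span_insert, hs, sup_comm, hsup]⟩

theorem exists_extension_of_isIdempotentElem {e : R} (he : IsIdempotentElem e)
    (f : span R {e} →ₗ[R] A) : ∃ h : R →ₗ[R] A, ∀ x : span R {e}, h x = f x := by
  refine ⟨f ∘ₗ LinearMap.toSpanSingleton R _ ⟨e, mem_span_singleton_self e⟩, fun x ↦ ?_⟩
  obtain ⟨r, hr⟩ := mem_span_singleton.mp x.2
  have hxe : (x : R) • (⟨e, mem_span_singleton_self e⟩ : span R {e}) = x := by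
    ext
    rw [SetLike.val_smul, smul_eq_mul, ← hr, smul_eq_mul, mul_assoc, he.eq]
  simp only [LinearMap.comp_apply, LinearMap.toSpanSingleton_apply, hxe]

theorem memOmegaBar_of_annihilatorOf_eq_bot {a : A} (ha : annihilatorOf R a = ⊥)
    (J : Submodule R R) : MemOmegaBar R A J :=
  ⟨{a}, by simp [ha]⟩

theorem annihilatorOf_inl_one (M : Type w) [AddCommGroup M] [Module R M] :
    annihilatorOf R ((1, 0) : R × M) = ⊥ := by
  ext r
  simp [annihilatorOf]

theorem exists_mul_mul_eq_of_retraction (a : R) (g : R →ₗ[R] span R {a}) (hg : (g a : R) = a) :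
    ∃ x : R, a * x * a = a := by
  obtain ⟨x, hx⟩ := mem_span_singleton.mp (g 1).2
  refine ⟨x, ?_⟩
  calc a * x * a = a • (g 1 : R) := by rw [← hx, smul_eq_mul, smul_eq_mul, mul_assoc]
    _ = a := by rw [← coe_smul, ← map_smul, smul_eq_mul, mul_one, hg]

end

theorem vonNeumannRegular_iff_all_absolutelySelfPure (R : Type u) [Ring R] :
    (∀ a : R, ∃ x : R, a * x * a = a) ↔
      (∀ (A : Type u) [AddCommGroup A] [Module R A], AbsolutelySelfPure R A) := by
  constructor
  · intro hreg A _ _ L hL f _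
    obtain ⟨e, he, rfl⟩ := exists_isIdempotentElem_eq_span_of_fg hreg hL
    exact exists_extension_of_isIdempotentElem he f
  · intro hall a
    let L := Submodule.span R {a}
    have ha : a ∈ L := Submodule.mem_span_singleton_self a
    obtain ⟨h, hh⟩ := hall (R × L) L (Submodule.fg_span_singleton a) (LinearMap.inr R R L)
      (memOmegaBar_of_annihilatorOf_eq_bot (annihilatorOf_inl_one L) _)
    refine exists_mul_mul_eq_of_retraction a (LinearMap.snd R R L ∘ₗ h) ?_
    simpa using congrArg (fun p : R × L ↦ (p.2 : R)) (hh ⟨a, ha⟩)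
end

section
/- If R is left noetherian, then every absolutely self pure left R-module is quasi injective. -/
universe u v w

noncomputable section QIAux

open Module.Baer

/-- A Fuchs-style criterion: every map from an ideal `I` to `M` whose kernel contains the
annihilator of some `y : M` (which is itself contained in `I`) extends to `R`. -/
def FuchsBaer (R : Type u) [Ring R] (M : Type v) [AddCommGroup M] [Module R M] : Prop :=
  ∀ (I : Ideal R) (y : M) (g : I →ₗ[R] M),
    (∀ r : R, r • y = 0 → ∃ mem : r ∈ I, g ⟨r, mem⟩ = 0) →
    ∃ g' : R →ₗ[R] M, ∀ (x : R) (mem : x ∈ I), g' x = g ⟨x, mem⟩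

namespace QI

variable {R : Type u} [Ring R] {M : Type v} {A : Type w}
  [AddCommGroup A] [Module R A] [AddCommGroup M] [Module R M]
  (i : A →ₗ[R] M) (f : A →ₗ[R] M) [Fact (Function.Injective i)]

theorem idealTo_ker (y : M) : ∀ r : R, r • y = 0 →
    ∃ mem : r ∈ ExtensionOfMaxAdjoin.ideal i f y,
      ExtensionOfMaxAdjoin.idealTo i f y ⟨r, mem⟩ = 0 := fun r eq1 => by
  have mem : r ∈ ExtensionOfMaxAdjoin.ideal i f y := by
    change r • y ∈ (extensionOfMax i f).domain
    rw [eq1]; exact Submodule.zero_mem _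
  refine ⟨mem, ?_⟩
  dsimp [ExtensionOfMaxAdjoin.idealTo]
  simp only [LinearMap.coe_mk, eq1, Subtype.coe_mk, ← ZeroMemClass.zero_def,
    (extensionOfMax i f).toLinearPMap.map_zero]

/-- The analogue of `Module.Baer.ExtensionOfMaxAdjoin.extendIdealTo`. -/
def extendIdealTo (h : FuchsBaer R M) (y : M) : R →ₗ[R] M :=
  (h (ExtensionOfMaxAdjoin.ideal i f y) y (ExtensionOfMaxAdjoin.idealTo i f y)
    (idealTo_ker i f y)).choose

theorem extendIdealTo_is_extension (h : FuchsBaer R M) (y : M) :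
    ∀ (x : R) (mem : x ∈ ExtensionOfMaxAdjoin.ideal i f y),
      extendIdealTo i f h y x = ExtensionOfMaxAdjoin.idealTo i f y ⟨x, mem⟩ :=
  (h (ExtensionOfMaxAdjoin.ideal i f y) y (ExtensionOfMaxAdjoin.idealTo i f y)
    (idealTo_ker i f y)).choose_spec

theorem extendIdealTo_eq (h : FuchsBaer R M) {y : M} (r : R)
    (hr : r • y ∈ (extensionOfMax i f).domain) : extendIdealTo i f h y r =
    (extensionOfMax i f).toLinearPMap ⟨r • y, hr⟩ := by
  simp only [extendIdealTo_is_extension i f h _ _ hr,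
    ExtensionOfMaxAdjoin.idealTo, LinearMap.coe_mk, Subtype.coe_mk, AddHom.coe_mk]

/-- The analogue of `Module.Baer.ExtensionOfMaxAdjoin.extensionToFun`. -/
def extensionToFun (h : FuchsBaer R M) {y : M} :
    supExtensionOfMaxSingleton i f y → M := fun x =>
  (extensionOfMax i f).toLinearPMap (ExtensionOfMaxAdjoin.fst i x) +
    extendIdealTo i f h y (ExtensionOfMaxAdjoin.snd i x)

theorem extensionToFun_wd (h : FuchsBaer R M) {y : M}
    (x : supExtensionOfMaxSingleton i f y) (a : (extensionOfMax i f).domain)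
    (r : R) (eq1 : ↑x = ↑a + r • y) :
    extensionToFun i f h x =
      (extensionOfMax i f).toLinearPMap a + extendIdealTo i f h y r := by
  cases' a with a ha
  have eq2 :
    (ExtensionOfMaxAdjoin.fst i x - a : M) = (r - ExtensionOfMaxAdjoin.snd i x) • y := by
    change x = a + r • y at eq1
    rwa [ExtensionOfMaxAdjoin.eqn, ← sub_eq_zero, ← sub_sub_sub_eq, sub_eq_zero, ← sub_smul]
      at eq1
  have eq3 :=
    extendIdealTo_eq i f h (r - ExtensionOfMaxAdjoin.snd i x)
      (by rw [← eq2]; exact Submodule.sub_mem _ (ExtensionOfMaxAdjoin.fst i x).2 ha)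
  simp only [map_sub, sub_smul, sub_eq_iff_eq_add] at eq3
  unfold extensionToFun
  rw [eq3, ← add_assoc, ← (extensionOfMax i f).toLinearPMap.map_add, AddMemClass.mk_add_mk]
  congr
  ext
  dsimp
  rw [Subtype.coe_mk, add_sub, ← eq1]
  exact eq_sub_of_add_eq (ExtensionOfMaxAdjoin.eqn i x).symm

/-- The analogue of `Module.Baer.extensionOfMaxAdjoin`. -/
def extensionOfMaxAdjoin (h : FuchsBaer R M) (y : M) : ExtensionOf i f where
  domain := supExtensionOfMaxSingleton i f y
  le := le_trans (extensionOfMax i f).le le_sup_left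
  toFun :=
    { toFun := extensionToFun i f h
      map_add' := fun a b => by
        have eq1 :
          ↑a + ↑b =
            ↑(ExtensionOfMaxAdjoin.fst i a + ExtensionOfMaxAdjoin.fst i b) +
              (ExtensionOfMaxAdjoin.snd i a + ExtensionOfMaxAdjoin.snd i b) • y := by
          rw [ExtensionOfMaxAdjoin.eqn, ExtensionOfMaxAdjoin.eqn, add_smul, Submodule.coe_add]
          ac_rfl
        rw [extensionToFun_wd (y := y) i f h (a + b) _ _ eq1, LinearPMap.map_add, map_add]
        unfold extensionToFun
        abel
      map_smul' := fun r a => by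
        dsimp
        have eq1 :
          r • (a : M) =
            ↑(r • ExtensionOfMaxAdjoin.fst i a) + (r • ExtensionOfMaxAdjoin.snd i a) • y := by
          rw [ExtensionOfMaxAdjoin.eqn, smul_add, smul_eq_mul, mul_smul]
          rfl
        rw [extensionToFun_wd i f h (r • a :) _ _ eq1, LinearMap.map_smul,
          LinearPMap.map_smul, ← smul_add]
        congr }
  is_extension m := by
    dsimp
    rw [(extensionOfMax i f).is_extension,
      extensionToFun_wd i f h _ ⟨i m, _⟩ 0 _, map_zero, add_zero]
    simp

theorem extensionOfMax_le (h : FuchsBaer R M) {y : M} :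
    extensionOfMax i f ≤ extensionOfMaxAdjoin i f h y :=
  ⟨le_sup_left, fun x x' EQ => by
    symm
    change extensionToFun i f h _ = _
    rw [extensionToFun_wd i f h x' x 0 (by simp [EQ]), map_zero, add_zero]⟩

theorem extensionOfMax_to_submodule_eq_top (h : FuchsBaer R M) :
    (extensionOfMax i f).domain = ⊤ := by
  refine Submodule.eq_top_iff'.mpr fun y => ?_
  rw [← extensionOfMax_is_max i f _ (extensionOfMax_le i f h), extensionOfMaxAdjoin,
    Submodule.mem_sup]
  exact ⟨0, Submodule.zero_mem _, y, Submodule.mem_span_singleton_self _, zero_add _⟩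

end QI

theorem FuchsBaer.quasiInjective {R : Type u} [Ring R] {M : Type v} [AddCommGroup M]
    [Module R M] (h : FuchsBaer R M) : IsQuasiInjective R M := by
  intro N f
  haveI : Fact (Function.Injective N.subtype) := ⟨Subtype.val_injective⟩
  set i := N.subtype
  have htop := QI.extensionOfMax_to_submodule_eq_top i f h
  let g : M →ₗ[R] M :=
    { toFun := fun y => (Module.Baer.extensionOfMax i f).toLinearPMap
        ⟨y, htop.symm ▸ Submodule.mem_top⟩
      map_add' := fun x y => by rw [← LinearPMap.map_add]; congr
      map_smul' := fun r x => by rw [← LinearPMap.map_smul]; dsimp }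
  refine ⟨g, fun x => ?_⟩
  rw [(Module.Baer.extensionOfMax i f).is_extension x]
  rfl

end QIAux

theorem fuchsBaer_of_absolutelySelfPure {R : Type u} [Ring R] [IsNoetherian R R] {M : Type v}
    [AddCommGroup M] [Module R M] (h : AbsolutelySelfPure R M) : FuchsBaer R M := by
  intro I y g hker
  have hfg : I.FG := (isNoetherian_def.mp inferInstance) I
  have homega : MemOmegaBar R M ((LinearMap.ker g).map I.subtype) := by
    refine ⟨{y}, fun r hr => ?_⟩
    have hy : r ∈ annihilatorOf R y :=
      (Submodule.mem_iInf _).1 ((Submodule.mem_iInf _).1 hr y) (Finset.mem_singleton_self y)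
    have hry : r • y = 0 := by
      simpa [annihilatorOf, LinearMap.mem_ker, LinearMap.toSpanSingleton_apply] using hy
    obtain ⟨mem, g0⟩ := hker r hry
    exact ⟨⟨r, mem⟩, LinearMap.mem_ker.mpr g0, rfl⟩
  obtain ⟨g', hg'⟩ := h I hfg g homega
  exact ⟨g', fun x mem => hg' ⟨x, mem⟩⟩

theorem quasiInjective_of_absolutelySelfPure_of_noetherian (R : Type u) [Ring R]
    [IsNoetherian R R] (M : Type v) [AddCommGroup M] [Module R M]
    (h : AbsolutelySelfPure R M) :
    IsQuasiInjective R M :=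
  (fuchsBaer_of_absolutelySelfPure h).quasiInjective
end

section
/- If R is a ring such that every absolutely self pure left R-module is quasi injective, then R is left noetherian. -/
universe u v w

/-!
Let `I₀ ≤ I₁ ≤ ⋯` be a chain of left ideals and `D = ⨁ₙ E(R ⧸ Iₙ)` with each `E(R ⧸ Iₙ)`
injective. Maps from finitely generated left ideals into `D` land in finitely many summands, so
they extend to `R`; the same then holds for `D × E(D)`, which is therefore absolutely self pure
and, by hypothesis, quasi injective. Quasi injectivity of `D × E(D)` makes `D` a retract of
`E(D)`, so `D` is injective. Finally (Bass–Papp), `x ↦ (x mod Iₙ)ₙ` on `⋃ₙ Iₙ` extends to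
`R`, and the finite support of the image of `1` bounds the chain.
-/

open CategoryTheory DirectSum

def FGBaer (R : Type u) [Ring R] (A : Type v) [AddCommGroup A] [Module R A] : Prop :=
  ∀ L : Submodule R R, L.FG → ∀ f : L →ₗ[R] A, ∃ g : R →ₗ[R] A, ∀ x : L, g x = f x

section

variable {R : Type u} [Ring R] {A : Type v} [AddCommGroup A] [Module R A]
  {B : Type w} [AddCommGroup B] [Module R B]

theorem Module.Baer.fgBaer (h : Module.Baer R A) : FGBaer R A := fun L _ f =>
  (h L f).imp fun _ hg x => hg x x.2

theorem FGBaer.absolutelySelfPure (h : FGBaer R A) : AbsolutelySelfPure R A :=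
  fun L hL f _ => h L hL f

theorem FGBaer.prod (hA : FGBaer R A) (hB : FGBaer R B) : FGBaer R (A × B) := by
  intro L hL f
  obtain ⟨g₁, hg₁⟩ := hA L hL (LinearMap.fst R A B ∘ₗ f)
  obtain ⟨g₂, hg₂⟩ := hB L hL (LinearMap.snd R A B ∘ₗ f)
  exact ⟨g₁.prod g₂, fun x => Prod.ext (hg₁ x) (hg₂ x)⟩

theorem FGBaer.directSum {ι : Type*} [DecidableEq ι] {E : ι → Type*}
    [∀ i, AddCommGroup (E i)] [∀ i, Module R (E i)] (hE : ∀ i, FGBaer R (E i)) :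
    FGBaer R (⨁ i, E i) := by
  classical
  intro L hL f
  obtain ⟨T, hT⟩ := (Submodule.fg_top L).mpr hL
  choose g hg using fun i => hE i L hL (component R ι E i ∘ₗ f)
  -- a finitely generated ideal is sent into finitely many summands
  let s : Finset ι := T.biUnion fun t => (f t).support
  refine ⟨∑ i ∈ s, lof R ι E i ∘ₗ g i, fun x => ?_⟩
  suffices (∑ i ∈ s, lof R ι E i ∘ₗ g i) ∘ₗ L.subtype = f from LinearMap.congr_fun this x
  refine LinearMap.ext_on hT fun t ht => ?_
  have hsupp : (f t).support ⊆ s := Finset.subset_biUnion_of_mem (fun t => (f t).support) ht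
  simp only [LinearMap.comp_apply, LinearMap.sum_apply, Submodule.subtype_apply, hg,
    ← apply_eq_component, lof_eq_of]
  conv_rhs => rw [← sum_support_of (f t)]
  refine (Finset.sum_subset hsupp fun i _ hi => ?_).symm
  rw [DFinsupp.notMem_support_iff.mp hi, map_zero]

theorem IsQuasiInjective.exists_retraction_of_prod (hQ : IsQuasiInjective R (A × B))
    (i : A →ₗ[R] B) (hi : Function.Injective i) : ∃ π : B →ₗ[R] A, π ∘ₗ i = LinearMap.id := by
  -- extend `(0, i a) ↦ (a, 0)` from the copy of `A` inside the second factor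
  let e := LinearEquiv.ofInjective (LinearMap.inr R A B ∘ₗ i) (LinearMap.inr_injective.comp hi)
  obtain ⟨g, hg⟩ := hQ _ (LinearMap.inl R A B ∘ₗ e.symm.toLinearMap)
  refine ⟨LinearMap.fst R A B ∘ₗ g ∘ₗ LinearMap.inr R A B, LinearMap.ext fun a => ?_⟩
  simpa [e, LinearEquiv.ofInjective_apply] using congrArg Prod.fst (hg (e a))

theorem Module.Baer.of_retraction (hB : Module.Baer R B) {i : A →ₗ[R] B} {π : B →ₗ[R] A}
    (hπ : π ∘ₗ i = LinearMap.id) : Module.Baer R A := by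
  intro L f
  obtain ⟨g, hg⟩ := hB L (i ∘ₗ f)
  refine ⟨π ∘ₗ g, fun x hx => ?_⟩
  simp [hg x hx, ← LinearMap.comp_apply π i, hπ]

end

section

variable (R : Type u) [Ring R]

abbrev injectiveUnder (M : Type u) [AddCommGroup M] [Module R M] : Type u :=
  (Injective.under (ModuleCat.of R M)).carrier

noncomputable def toInjectiveUnder (M : Type u) [AddCommGroup M] [Module R M] :
    M →ₗ[R] injectiveUnder R M :=
  (Injective.ι (ModuleCat.of R M)).hom

theorem toInjectiveUnder_injective (M : Type u) [AddCommGroup M] [Module R M] :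
    Function.Injective (toInjectiveUnder R M) :=
  (ModuleCat.mono_iff_injective _).mp inferInstance

theorem baer_injectiveUnder (M : Type u) [AddCommGroup M] [Module R M] :
    Module.Baer R (injectiveUnder R M) :=
  have : Module.Injective R (injectiveUnder R M) :=
    Module.injective_module_of_injective_object (inj := Injective.injective_under _)
  Module.Baer.of_injective this

end

section

variable {R : Type u} [Ring R]

noncomputable def chainClasses (I : ℕ →o Submodule R R) : ↥(⨆ n, I n) →ₗ[R] ⨁ n, R ⧸ I n where
  toFun x :=
    have hx := (Submodule.mem_iSup_of_chain I x).mp x.2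
    ⟨fun n => Submodule.Quotient.mk x, Trunc.mk ⟨Multiset.range hx.choose, fun n => by
      refine (lt_or_ge n hx.choose).imp (by simp) fun hn => ?_
      exact (Submodule.Quotient.mk_eq_zero _).mpr (I.monotone hn hx.choose_spec)⟩⟩
  map_add' _ _ := DFinsupp.ext fun _ => rfl
  map_smul' _ _ := DFinsupp.ext fun _ => rfl

theorem chainClasses_apply (I : ℕ →o Submodule R R) (x : ↥(⨆ n, I n)) (n : ℕ) :
    chainClasses I x n = Submodule.Quotient.mk (x : R) :=
  rfl

theorem chain_stabilizes_of_baer_directSum (I : ℕ →o Submodule R R) {E : ℕ → Type*}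
    [∀ n, AddCommGroup (E n)] [∀ n, Module R (E n)] (j : ∀ n, R ⧸ I n →ₗ[R] E n)
    (hj : ∀ n, Function.Injective (j n)) (hE : Module.Baer R (⨁ n, E n)) :
    ∃ N, ∀ m, N ≤ m → I N = I m := by
  classical
  obtain ⟨g, hg⟩ := hE _ (lmap j ∘ₗ chainClasses I)
  obtain ⟨N, hN⟩ := (g 1).support.exists_nat_subset_range
  suffices ⨆ n, I n ≤ I N from
    ⟨N, fun m hm => le_antisymm (I.monotone hm) ((le_iSup I m).trans this)⟩
  intro x hx
  have hgx : g x = x • g 1 := by rw [← map_smul, smul_eq_mul, mul_one]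
  have hjx : j N (Submodule.Quotient.mk x) = 0 := by
    have hgN : g 1 N = 0 := DFinsupp.notMem_support_iff.mp fun h => by simpa using hN h
    simpa [chainClasses_apply, hgx, DirectSum.smul_apply, hgN] using
      (congrArg (· N) (hg x hx)).symm
  exact (Submodule.Quotient.mk_eq_zero _).mp (hj N (hjx.trans (map_zero _).symm))

end

theorem noetherian_of_absolutelySelfPure_imp_quasiInjective (R : Type u) [Ring R]
    (h : ∀ (M : Type u) [AddCommGroup M] [Module R M],
      AbsolutelySelfPure R M → IsQuasiInjective R M) :
    IsNoetherian R R := by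
  refine monotone_stabilizes_iff_noetherian.mp fun I => ?_
  let D := ⨁ n, injectiveUnder R (R ⧸ I n)
  have hD : FGBaer R D := FGBaer.directSum fun n => (baer_injectiveUnder R _).fgBaer
  have hQ : IsQuasiInjective R (D × injectiveUnder R D) :=
    h _ (hD.prod (baer_injectiveUnder R D).fgBaer).absolutelySelfPure
  obtain ⟨π, hπ⟩ := hQ.exists_retraction_of_prod _ (toInjectiveUnder_injective R D)
  exact chain_stabilizes_of_baer_directSum I (fun n => toInjectiveUnder R _)
    (fun n => toInjectiveUnder_injective R _) ((baer_injectiveUnder R D).of_retraction hπ)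
end

section
/- A ring R is semisimple if and only if every left R-module is quasi injective. -/
universe u v w

/-! A complement of a submodule `N ≤ M` yields a projection through which every map `N → M`
extends. Conversely, quasi-injectivity of `M × K` for `K ≤ M` extends the map `K × 0 → 0 × K` to
an endomorphism of `M × K`, whose `M → K` corner is a retraction of `K ↪ M`; so every submodule
is a direct summand. -/

section

variable {R : Type*} [Ring R] {M : Type*} [AddCommGroup M] [Module R M]

theorem IsSemisimpleModule.isQuasiInjective [IsSemisimpleModule R M] : IsQuasiInjective R M :=
  fun N f ↦
    let ⟨g, hg⟩ := IsSemisimpleModule.extension_property N.subtype N.injective_subtype f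
    ⟨g, fun x ↦ congr($hg x)⟩

theorem IsQuasiInjective.exists_extend_of_prod {N : Type*} [AddCommGroup N] [Module R N]
    (h : IsQuasiInjective R (M × N)) (K : Submodule R M) (f : K →ₗ[R] N) :
    ∃ g : M →ₗ[R] N, ∀ x : K, g x = f x := by
  let e := K.equivMapOfInjective (LinearMap.inl R M N) LinearMap.inl_injective
  obtain ⟨G, hG⟩ := h (K.map (LinearMap.inl R M N)) (LinearMap.inr R M N ∘ₗ f ∘ₗ e.symm)
  refine ⟨LinearMap.snd R M N ∘ₗ G ∘ₗ LinearMap.inl R M N, fun x ↦ ?_⟩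
  simpa [e] using congr(Prod.snd $(hG (e x)))

theorem isSemisimpleModule_of_forall_isQuasiInjective_prod
    (h : ∀ K : Submodule R M, IsQuasiInjective R (M × K)) : IsSemisimpleModule R M where
  exists_isCompl K :=
    let ⟨_, hr⟩ := (h K).exists_extend_of_prod K LinearMap.id
    ⟨_, LinearMap.isCompl_of_proj hr⟩

end

theorem semisimple_iff_all_quasiInjective (R : Type u) [Ring R] :
    IsSemisimpleRing R ↔
      (∀ (M : Type u) [AddCommGroup M] [Module R M], IsQuasiInjective R M) :=
  ⟨fun _ _ _ _ ↦ IsSemisimpleModule.isQuasiInjective,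
    fun h ↦ isSemisimpleModule_of_forall_isQuasiInjective_prod fun K ↦ h (R × K)⟩
end

section
/- Over the ring of integers ℤ, a module is absolutely self pure if and only if it is quasi injective. -/
universe u v w

/-!
Over a principal ideal domain every member of `Ω̄(M)` contains the annihilator of a single
element `c`. So for a map `f : R ∙ n → M` with such a kernel, `n • c ↦ f n` is a well defined map
on `R ∙ n • c`; quasi injectivity extends it to an endomorphism `g`, and `r ↦ r • g c` extends `f`.

Conversely, over a noetherian ring absolute self purity of `M` is Fuchs' relative Baer condition
for `M` over itself, and the Zorn argument behind Baer's criterion only needs this condition: if a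
maximal partial extension `F` of `N → M` has domain `D ∌ y`, then `r ↦ F (r • y)` on the ideal
`{r | r • y ∈ D}` vanishes on the annihilator of `y`, so it extends to `R`, and `F` extends to
`D ⊔ R ∙ y`.
-/

theorem mem_annihilatorOf {R : Type u} [Ring R] {A : Type v} [AddCommGroup A] [Module R A]
    {a : A} {r : R} : r ∈ annihilatorOf R a ↔ r • a = 0 := by
  rw [annihilatorOf, LinearMap.mem_ker, LinearMap.toSpanSingleton_apply]

section PrincipalIdealDomain

variable {R : Type u} [CommRing R] [IsDomain R] [IsPrincipalIdealRing R]
  {A : Type v} [AddCommGroup A] [Module R A]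

theorem MemOmegaBar.exists_annihilatorOf_le {J : Submodule R R} (hJ : MemOmegaBar R A J) :
    ∃ c : A, annihilatorOf R c ≤ J := by
  obtain ⟨s, hs⟩ := hJ
  obtain ⟨c, hc⟩ :=
    Module.exists_ker_toSpanSingleton_eq_annihilator R (Submodule.span R (s : Set A))
  refine ⟨c, le_trans (fun r hr => ?_) hs⟩
  have hr : r ∈ Module.annihilator R (Submodule.span R (s : Set A)) := by
    rw [← hc, LinearMap.mem_ker, LinearMap.toSpanSingleton_apply]
    exact Subtype.ext (mem_annihilatorOf.mp hr)
  simp only [Submodule.mem_iInf, mem_annihilatorOf]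
  exact fun a ha => congr_arg Subtype.val
    (Module.mem_annihilator.mp hr ⟨a, Submodule.subset_span ha⟩)

theorem AbsolutelySelfPure.of_isQuasiInjective (hA : IsQuasiInjective R A) :
    AbsolutelySelfPure R A := by
  intro L _ f hf
  obtain ⟨c, hc⟩ := hf.exists_annihilatorOf_le
  obtain ⟨n, rfl⟩ := (IsPrincipalIdealRing.principal L).principal
  set gen : Submodule.span R {n} := ⟨n, Submodule.mem_span_singleton_self n⟩
  have H : ∀ k : R, k • n • c = 0 → k • f gen = 0 := by
    intro k hk
    have hkn : k * n ∈ annihilatorOf R c := mem_annihilatorOf.mpr (by rwa [mul_smul])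
    obtain ⟨x, hx, hxk⟩ := hc hkn
    rw [← map_smul, show k • gen = x from Subtype.ext hxk.symm]
    exact hx
  obtain ⟨g, hg⟩ := hA _ (LinearPMap.mkSpanSingleton' (n • c) (f gen) H).toFun
  have hg_gen : g (n • c) = f gen :=
    (hg ⟨n • c, Submodule.mem_span_singleton_self _⟩).trans
      (LinearPMap.mkSpanSingleton'_apply_self _ _ H _)
  refine ⟨LinearMap.toSpanSingleton R A (g c), fun x => ?_⟩
  obtain ⟨k, hk⟩ := Submodule.mem_span_singleton.mp x.2
  rw [show x = k • gen from Subtype.ext hk.symm, map_smul, ← hg_gen, map_smul]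
  simp [gen, mul_smul]

end PrincipalIdealDomain

/-- Fuchs' relative Baer condition for `Q` to be `N`-injective. -/
def Module.IsRelativelyBaer (R : Type u) [Ring R] (N : Type v) (Q : Type w) [AddCommGroup N]
    [Module R N] [AddCommGroup Q] [Module R Q] : Prop :=
  ∀ (y : N) (I : Ideal R) (g : I →ₗ[R] Q), annihilatorOf R y ≤ (LinearMap.ker g).map I.subtype →
    ∃ g' : R →ₗ[R] Q, ∀ r : I, g' r = g r

namespace Module.IsRelativelyBaer

open Module.Baer

variable {R : Type u} [Ring R] {N : Type v} {Q : Type w} [AddCommGroup N] [Module R N]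
  [AddCommGroup Q] [Module R Q] {X : Type*} [AddCommGroup X] [Module R X]

theorem mem_extensionOfMax_domain (hQ : IsRelativelyBaer R N Q) (i : X →ₗ[R] N)
    [Fact (Function.Injective i)] (f : X →ₗ[R] Q) (y : N) :
    y ∈ (extensionOfMax i f).domain := by
  set F := extensionOfMax i f
  set I : Ideal R := F.domain.comap (LinearMap.toSpanSingleton R N y)
  set ρ : I →ₗ[R] F.domain := (LinearMap.toSpanSingleton R N y).restrict fun _ h => h
  set φ : I →ₗ[R] Q := F.toFun ∘ₗ ρ
  have hφ : annihilatorOf R y ≤ (LinearMap.ker φ).map I.subtype := fun r hr => by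
    have hr : r • y = 0 := mem_annihilatorOf.mp hr
    have hrI : r ∈ I := Submodule.mem_comap.mpr (by
      rw [LinearMap.toSpanSingleton_apply, hr]; exact zero_mem _)
    refine Submodule.mem_map.mpr ⟨⟨r, hrI⟩, ?_, rfl⟩
    rw [LinearMap.mem_ker, LinearMap.comp_apply, show ρ ⟨r, hrI⟩ = 0 from Subtype.ext hr,
      map_zero]
  obtain ⟨φ', hφ'⟩ := hQ y I φ hφ
  have hφ'_apply (r : R) (hr : r • y ∈ F.domain) :
      r • φ' 1 = F.toLinearPMap ⟨r • y, hr⟩ := by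
    rw [← map_smul, smul_eq_mul, mul_one]
    exact hφ' ⟨r, hr⟩
  let G := LinearPMap.mkSpanSingleton' (σ := RingHom.id R) y (φ' 1) fun r hr => by
    rw [RingHom.id_apply, hφ'_apply r (by rw [hr]; exact zero_mem _)]
    exact (congr_arg F.toLinearPMap (Subtype.ext hr : (⟨r • y, _⟩ : F.domain) = 0)).trans
      (map_zero _)
  have hFG : ∀ (x : F.domain) (z : G.domain), (x : N) = z → F.toLinearPMap x = G z := by
    rintro ⟨x, hx⟩ ⟨z, hz⟩ (rfl : x = z)
    obtain ⟨r, rfl⟩ := Submodule.mem_span_singleton.mp hz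
    rw [LinearPMap.mkSpanSingleton'_apply, RingHom.id_apply, hφ'_apply r hx]
  have hF_le := F.toLinearPMap.left_le_sup G hFG
  let E : ExtensionOf i f :=
    { F.toLinearPMap.sup G hFG with
      le := F.le.trans le_sup_left
      is_extension := fun m => (F.is_extension m).trans (hF_le.2 rfl) }
  have hE : E = F := extensionOfMax_is_max i f E hF_le
  have hyE : y ∈ E.domain := Submodule.mem_sup_right (Submodule.mem_span_singleton_self y)
  rwa [hE] at hyE

theorem exists_extension (hQ : IsRelativelyBaer R N Q) (i : X →ₗ[R] N)
    (hi : Function.Injective i) (f : X →ₗ[R] Q) : ∃ g : N →ₗ[R] Q, ∀ x, g (i x) = f x := by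
  have : Fact (Function.Injective i) := ⟨hi⟩
  set F := extensionOfMax i f
  have htop : F.domain = ⊤ := eq_top_iff.mpr fun y _ => hQ.mem_extensionOfMax_domain i f y
  exact ⟨F.toFun ∘ₗ (LinearEquiv.ofTop _ htop).symm.toLinearMap, fun x => (F.is_extension x).symm⟩

end Module.IsRelativelyBaer

section

variable {R : Type u} {A : Type v} [AddCommGroup A]

theorem AbsolutelySelfPure.isRelativelyBaer [Ring R] [IsNoetherianRing R] [Module R A]
    (hA : AbsolutelySelfPure R A) : Module.IsRelativelyBaer R A A :=
  fun y I g hg => hA I (IsNoetherian.noetherian I) g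
    ⟨{y}, by simpa only [Finset.mem_singleton, iInf_iInf_eq_left] using hg⟩

theorem IsQuasiInjective.of_isRelativelyBaer [Ring R] [Module R A]
    (hA : Module.IsRelativelyBaer R A A) : IsQuasiInjective R A :=
  fun N f => hA.exists_extension N.subtype N.injective_subtype f

theorem absolutelySelfPure_iff_isQuasiInjective [CommRing R] [IsDomain R]
    [IsPrincipalIdealRing R] [Module R A] : AbsolutelySelfPure R A ↔ IsQuasiInjective R A :=
  ⟨fun hA => .of_isRelativelyBaer hA.isRelativelyBaer, .of_isQuasiInjective⟩

end

theorem int_absolutelySelfPure_iff_quasiInjective (M : Type v) [AddCommGroup M]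
    [Module ℤ M] :
    AbsolutelySelfPure ℤ M ↔ IsQuasiInjective ℤ M :=
  absolutelySelfPure_iff_isQuasiInjective
end

section
/- If A is absolutely quasi pure (i.e., a pure submodule of its quasi injective envelope), then any finite direct sum of copies of A is absolutely quasi pure. -/
/-!
Quasi injectivity of `Q` means that `Q` is `Q`-injective. Relative injectivity passes to finite
direct sums in both arguments (in the source by splitting off one summand at a time), so `Qⁿ` is
`Qⁿ`-injective. Purity of `A` in `Q` is checked coordinatewise, hence `Aⁿ` is pure in `Qⁿ`.
-/

universe u v w

/-- `A` is absolutely quasi pure: `A` embeds as a pure submodule of some quasi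
injective module (equivalently, `A` is pure in its quasi injective envelope). -/
def AbsolutelyQuasiPure (R : Type u) [Ring R] (A : Type v) [AddCommGroup A] [Module R A] :
    Prop :=
  ∃ (Q : Type (max u v)) (_ : AddCommGroup Q) (_ : Module R Q) (i : A →ₗ[R] Q),
    Function.Injective i ∧ IsQuasiInjective R Q ∧ IsPureIn R i

/-- `M` is `N`-injective. -/
def IsRelativelyInjective (R : Type u) [Ring R] (M N : Type*) [AddCommGroup M] [Module R M]
    [AddCommGroup N] [Module R N] : Prop :=
  ∀ (K : Submodule R N) (f : K →ₗ[R] M), ∃ g : N →ₗ[R] M, ∀ x : K, g x = f x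

section RelativelyInjective

variable {R : Type u} [Ring R] {M N N₁ N₂ : Type*} [AddCommGroup M] [Module R M]
  [AddCommGroup N] [Module R N] [AddCommGroup N₁] [Module R N₁] [AddCommGroup N₂] [Module R N₂]

theorem LinearMap.exists_comp_rangeRestrict_eq_of_ker_le (p : N →ₗ[R] N₁) (f : N →ₗ[R] M)
    (h : LinearMap.ker p ≤ LinearMap.ker f) :
    ∃ φ : LinearMap.range p →ₗ[R] M, ∀ x, φ (p.rangeRestrict x) = f x :=
  ⟨(LinearMap.ker p).liftQ f h ∘ₗ p.quotKerEquivRange.symm.toLinearMap, fun x => by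
    simp [LinearMap.rangeRestrict, LinearMap.codRestrict,
      LinearMap.quotKerEquivRange_symm_apply_image]⟩

theorem IsRelativelyInjective.of_linearEquiv (e : N₁ ≃ₗ[R] N₂)
    (h : IsRelativelyInjective R M N₁) : IsRelativelyInjective R M N₂ := by
  intro K f
  obtain ⟨g, hg⟩ :=
    h (K.map (e.symm : N₂ →ₗ[R] N₁)) (f ∘ₗ (e.symm.submoduleMap K).symm.toLinearMap)
  refine ⟨g ∘ₗ e.symm.toLinearMap, fun x => ?_⟩
  simpa using hg (e.symm.submoduleMap K x)

theorem IsRelativelyInjective.prod (h₁ : IsRelativelyInjective R M N₁)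
    (h₂ : IsRelativelyInjective R M N₂) : IsRelativelyInjective R M (N₁ × N₂) := by
  intro K f
  obtain ⟨g₁, hg₁⟩ := h₁ (K.comap (LinearMap.inl R N₁ N₂))
    (f ∘ₗ (LinearMap.inl R N₁ N₂).restrict fun _ hx => hx)
  -- After correcting `f` by `g₁` on the first coordinate, it only depends on the second one.
  set f' : K →ₗ[R] M := f - g₁ ∘ₗ LinearMap.fst R N₁ N₂ ∘ₗ K.subtype
  set p : K →ₗ[R] N₂ := LinearMap.snd R N₁ N₂ ∘ₗ K.subtype
  have hker : LinearMap.ker p ≤ LinearMap.ker f' := by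
    rintro ⟨⟨x₁, x₂⟩, hx⟩ (rfl : x₂ = 0)
    exact sub_eq_zero.2 (hg₁ ⟨x₁, hx⟩).symm
  obtain ⟨φ, hφ⟩ := p.exists_comp_rangeRestrict_eq_of_ker_le f' hker
  obtain ⟨g₂, hg₂⟩ := h₂ (LinearMap.range p) φ
  refine ⟨g₁ ∘ₗ LinearMap.fst R N₁ N₂ + g₂ ∘ₗ LinearMap.snd R N₁ N₂, fun x => ?_⟩
  have hx₂ : g₂ (x : N₁ × N₂).2 = f x - g₁ (x : N₁ × N₂).1 := (hg₂ _).trans (hφ x)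
  simp [hx₂]

theorem IsRelativelyInjective.pi_fin {n : ℕ} {P : Fin n → Type*} [∀ i, AddCommGroup (P i)]
    [∀ i, Module R (P i)] (h : ∀ i, IsRelativelyInjective R M (P i)) :
    IsRelativelyInjective R M (∀ i, P i) := by
  induction n with
  | zero =>
    refine fun K f => ⟨0, fun x => ?_⟩
    rw [Subsingleton.elim x 0, map_zero, LinearMap.zero_apply]
  | succ n ih =>
    exact ((h 0).prod (ih fun i => h i.succ)).of_linearEquiv (Fin.consLinearEquiv R P)

theorem IsRelativelyInjective.pi_left {ι : Type*} {M : ι → Type*} [∀ i, AddCommGroup (M i)]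
    [∀ i, Module R (M i)] (h : ∀ i, IsRelativelyInjective R (M i) N) :
    IsRelativelyInjective R (∀ i, M i) N := by
  intro K f
  choose g hg using fun i => h i K (LinearMap.proj i ∘ₗ f)
  exact ⟨LinearMap.pi g, fun x => funext fun i => hg i x⟩

end RelativelyInjective

theorem IsQuasiInjective.pi_fin {R : Type u} [Ring R] {Q : Type v} [AddCommGroup Q] [Module R Q]
    (hQ : IsQuasiInjective R Q) (n : ℕ) : IsQuasiInjective R (Fin n → Q) :=
  IsRelativelyInjective.pi_left fun _ => IsRelativelyInjective.pi_fin fun _ => hQ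

theorem IsPureIn.piMap {R : Type u} [Ring R] {ι : Type*} {A B : ι → Type*}
    [∀ j, AddCommGroup (A j)] [∀ j, Module R (A j)] [∀ j, AddCommGroup (B j)]
    [∀ j, Module R (B j)] {i : ∀ j, A j →ₗ[R] B j} (h : ∀ j, IsPureIn R (i j)) :
    IsPureIn R (LinearMap.piMap i) := by
  intro n K hK f g hfg
  choose k hk using fun j => h j n K hK (LinearMap.proj j ∘ₗ f) (LinearMap.proj j ∘ₗ g)
    fun x => congrFun (hfg x) j
  exact ⟨LinearMap.pi k, fun x => funext fun j => hk j x⟩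

theorem absolutelyQuasiPure_finite_directSum {R : Type u} [Ring R] (A : Type v)
    [AddCommGroup A] [Module R A] (h : AbsolutelyQuasiPure R A) (n : ℕ) :
    AbsolutelyQuasiPure R (Fin n → A) := by
  obtain ⟨Q, _, _, i, hinj, hQ, hpure⟩ := h
  exact ⟨Fin n → Q, inferInstance, inferInstance, LinearMap.piMap fun _ => i,
    Function.Injective.piMap fun _ => hinj, hQ.pi_fin n, IsPureIn.piMap fun _ => hpure⟩
end
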